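/- For the product basis |φ₀⟩=|00⟩, |φ₁⟩=|01⟩, |φ₊⟩=|+⟩⊗|+⟩, |φ₋⟩=|+⟩⊗|−⟩ of ℂ²⊗ℂ², the reciprocal vectors are |φ̃₀⟩=√2|−⟩⊗|0⟩, |φ̃₁⟩=√2|−⟩⊗|1⟩, |φ̃₊⟩=√2|1⟩⊗|+⟩, |φ̃₋⟩=√2|1⟩⊗|−⟩; in particular all four reciprocal vectors are product vectors. -/

import Mathlib

open Matrix Complex
open scoped Matrix Kronecker ComplexOrder

noncomputable section

abbrev Q2 := Fin 2 → ℂ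
abbrev V4 := Fin 2 × Fin 2 → ℂ
abbrev Op2 := Matrix (Fin 2) (Fin 2) ℂ
abbrev Op4 := Matrix (Fin 2 × Fin 2) (Fin 2 × Fin 2) ℂ

def ket0 : Q2 := ![1, 0]
def ket1 : Q2 := ![0, 1]
def ketP : Q2 := (Real.sqrt 2 : ℂ)⁻¹ • (ket0 + ket1)
def ketM : Q2 := (Real.sqrt 2 : ℂ)⁻¹ • (ket0 - ket1)

/-- tensor product of two qubit vectors -/
def tens (a b : Q2) : V4 := fun p => a p.1 * b p.2

/-- rank-one projector |v⟩⟨v| on one qubit -/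
def proj2 (v : Q2) : Op2 := Matrix.of fun i j => v i * star (v j)

/-- rank-one operator |v⟩⟨v| on two qubits -/
def proj (v : V4) : Op4 := Matrix.of fun i j => v i * star (v j)

/-- inner product ⟨u|v⟩ -/
def ip4 (u v : V4) : ℂ := star u ⬝ᵥ v

/-- expectation value ⟨u|M|u⟩ -/
def expVal (u : V4) (M : Op4) : ℂ := star u ⬝ᵥ (M *ᵥ u)

-- Bell states
def PhiP : V4 := (Real.sqrt 2 : ℂ)⁻¹ • (tens ket0 ket0 + tens ket1 ket1)
def PhiM : V4 := (Real.sqrt 2 : ℂ)⁻¹ • (tens ket0 ket0 - tens ket1 ket1)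
def PsiP : V4 := (Real.sqrt 2 : ℂ)⁻¹ • (tens ket0 ket1 + tens ket1 ket0)
def PsiM : V4 := (Real.sqrt 2 : ℂ)⁻¹ • (tens ket0 ket1 - tens ket1 ket0)

-- Example 1 states
def φ0 : V4 := tens ket0 ket0
def φ1 : V4 := tens ket0 ket1
def φP : V4 := tens ketP ketP
def φM : V4 := tens ketM ketM

-- Example 1 reciprocal vectors
def φt0 : V4 := (Real.sqrt 2 : ℂ) • PhiM
def φt1 : V4 := (Real.sqrt 2 : ℂ) • PsiM
def φtP : V4 := (Real.sqrt 2 : ℂ) • tens ket1 ketP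
def φtM : V4 := -((Real.sqrt 2 : ℂ) • tens ket1 ketM)

-- Example 2 states
def ψ0 : V4 := tens ket0 ket0
def ψ1 : V4 := tens ket0 ket1
def ψP : V4 := tens ketP ketP
def ψM : V4 := tens ketP ketM

-- Example 2 reciprocal vectors
def ψt0 : V4 := (Real.sqrt 2 : ℂ) • tens ketM ket0
def ψt1 : V4 := (Real.sqrt 2 : ℂ) • tens ketM ket1
def ψtP : V4 := (Real.sqrt 2 : ℂ) • tens ket1 ketP
def ψtM : V4 := (Real.sqrt 2 : ℂ) • tens ket1 ketM

/-- prior probabilities η₀=η₁=γ/(2(1+γ)), η₊=η₋=1/(2(1+γ)) -/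
def η (γ : ℝ) : Fin 4 → ℝ :=
  ![γ / (2 * (1 + γ)), γ / (2 * (1 + γ)), 1 / (2 * (1 + γ)), 1 / (2 * (1 + γ))]

/-!
The vectors `ψt j` are reciprocal to the `ψ i` because both families consist of product vectors,
so `⟨ψ i | ψt j⟩` factorises into two one-qubit overlaps, and in every off-diagonal entry one of
them vanishes (`⟨0|1⟩ = ⟨+|−⟩ = 0`). Biorthogonality then yields linear independence, the
functionals `⟨ψt j | ·⟩` serving as a dual family, and four independent vectors span `ℂ² ⊗ ℂ²`.
-/

theorem Matrix.linearIndependent_of_star_dotProduct_eq_ite {ι n R : Type*} [Fintype n]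
    [DecidableEq ι] [CommRing R] [StarRing R] (v w : ι → n → R)
    (h : ∀ i j, star (v i) ⬝ᵥ w j = if i = j then 1 else 0) : LinearIndependent R v := by
  have hdual : ∀ i j, v i ⬝ᵥ star (w j) = if i = j then 1 else 0 := fun i j => by
    rw [dotProduct_comm, ← star_star (v i), star_dotProduct_star, h]
    split_ifs <;> simp
  refine .of_pairwise_dual_eq_zero_one v (fun j => (dotProductBilin R R).flip (star (w j)))
    (fun j i hji => ?_) (fun i => ?_)
  · simpa [hji.symm] using hdual i j
  · simpa using hdual i i

lemma ip4_tens (a b c d : Q2) : ip4 (tens a b) (tens c d) = (star a ⬝ᵥ c) * (star b ⬝ᵥ d) := by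
  simp only [ip4, tens, dotProduct, Fintype.sum_prod_type, Finset.sum_mul_sum, Pi.star_apply,
    star_mul']
  exact Finset.sum_congr rfl fun _ _ => Finset.sum_congr rfl fun _ _ => by ring

lemma ip4_smul_right (c : ℂ) (u v : V4) : ip4 u (c • v) = c * ip4 u v :=
  dotProduct_smul ..

lemma smul_tens (c : ℂ) (a b : Q2) : c • tens a b = tens (c • a) b := by
  funext p
  simp [tens, mul_assoc]

lemma ketP_eq : ketP = ![(Real.sqrt 2 : ℂ)⁻¹, (Real.sqrt 2 : ℂ)⁻¹] := by
  ext i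
  fin_cases i <;> simp [ketP, ket0, ket1]

lemma ketM_eq : ketM = ![(Real.sqrt 2 : ℂ)⁻¹, -(Real.sqrt 2 : ℂ)⁻¹] := by
  ext i
  fin_cases i <;> simp [ketM, ket0, ket1]

lemma inv_sqrt_two_mul_self : (Real.sqrt 2 : ℂ)⁻¹ * (Real.sqrt 2 : ℂ)⁻¹ = 2⁻¹ := by
  rw [← mul_inv, ← ofReal_mul, Real.mul_self_sqrt zero_le_two, ofReal_ofNat]

lemma ip4_ψ_ψt (i j : Fin 4) :
    ip4 (![ψ0, ψ1, ψP, ψM] i) (![ψt0, ψt1, ψtP, ψtM] j) = if i = j then 1 else 0 := by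
  fin_cases i <;> fin_cases j <;>
    simp only [Fin.reduceFinMk, Matrix.cons_val, Fin.isValue, ψ0, ψ1, ψP, ψM, ψt0, ψt1, ψtP, ψtM,
      ip4_smul_right, ip4_tens] <;>
    simp [ketP_eq, ketM_eq, ket0, ket1, dotProduct, inv_sqrt_two_mul_self] <;> norm_num

/-- the Example-2 product vectors form a basis, the listed vectors
are their reciprocal vectors, and all four reciprocal vectors are product vectors. -/
theorem stmt_9 :
    LinearIndependent ℂ ![ψ0, ψ1, ψP, ψM] ∧
    Submodule.span ℂ (Set.range ![ψ0, ψ1, ψP, ψM]) = ⊤ ∧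
    (∀ i j : Fin 4,
      ip4 (![ψ0, ψ1, ψP, ψM] i) (![ψt0, ψt1, ψtP, ψtM] j) = if i = j then 1 else 0) ∧
    (∀ k : Fin 4, ∃ a b : Q2, ![ψt0, ψt1, ψtP, ψtM] k = tens a b) := by
  have hli : LinearIndependent ℂ ![ψ0, ψ1, ψP, ψM] :=
    linearIndependent_of_star_dotProduct_eq_ite _ _ ip4_ψ_ψt
  refine ⟨hli, hli.span_eq_top_of_card_eq_finrank (by simp), ip4_ψ_ψt, fun k => ?_⟩
  fin_cases k <;> exact ⟨_, _, smul_tens _ _ _⟩
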